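/- Let n > 2 be an integer and p ∈ [0,1]^n with q = (1/n) Σ_{i=1}^n p_i < 1/2 − 1/n. Let a ∈ [0,1]^n with a_i = (1/(n−1)) Σ_{j≠i} (p_i p_j + (1−p_i)(1−p_j)). Then v* = (1−2q)² satisfies v* > v₀(a), v* = f(a, v*), v* is the unique solution of the equation v = f(a,v) on [v₀(a), +∞), and p_i = g_i(a, v*) for every i ∈ {1,…,n}. -/
import Mathlib


open Finset
open scoped Classical

/-- `δ_i(u,v) = v + (4(n−1)/n²)(1 − 2u_i)`. -/
noncomputable def deltaFP (n : ℕ) (u : Fin n → ℝ) (v : ℝ) (i : Fin n) : ℝ :=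
  v + 4 * ((n : ℝ) - 1) / (n : ℝ) ^ 2 * (1 - 2 * u i)

/-- `v₀(u) = max( (4(n−1)/n²)·max_i(2u_i − 1), 0 )`. -/
noncomputable def v0FP (n : ℕ) (u : Fin n → ℝ) : ℝ :=
  max (4 * ((n : ℝ) - 1) / (n : ℝ) ^ 2 * (⨆ i, (2 * u i - 1))) 0

/-- `f(u,v) = ( (1/(n−2)) Σ_i √(δ_i(u,v)) )²`. -/
noncomputable def fFP (n : ℕ) (u : Fin n → ℝ) (v : ℝ) : ℝ :=
  ((1 / ((n : ℝ) - 2)) * ∑ i, Real.sqrt (deltaFP n u v i)) ^ 2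

/-- `g_i(u,v) = 1/2 + (n/4)(√(δ_i(u,v)) − √v)`. -/
noncomputable def gFP (n : ℕ) (u : Fin n → ℝ) (v : ℝ) (i : Fin n) : ℝ :=
  1 / 2 + (n : ℝ) / 4 * (Real.sqrt (deltaFP n u v i) - Real.sqrt v)

/-- `v₁(u) = (2/n) Σ_i (2u_i − 1)`. -/
noncomputable def v1FP (n : ℕ) (u : Fin n → ℝ) : ℝ :=
  (2 / (n : ℝ)) * ∑ i, (2 * u i - 1)

lemma fpAux (n : ℕ) (hn : 2 < n) (d : Fin n → ℝ) (v w : ℝ) (hvw : v < w) (hv0 : 0 ≤ v)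
    (hdv : ∀ i, 0 ≤ v + d i)
    (hv : ∑ i, Real.sqrt (v + d i) = ((n : ℝ) - 2) * Real.sqrt v)
    (hw : ∑ i, Real.sqrt (w + d i) = ((n : ℝ) - 2) * Real.sqrt w) : False := by
  have hn2 : (0:ℝ) < (n:ℝ) - 2 := by
    have : (2:ℝ) < n := by exact_mod_cast hn
    linarith
  have hwpos : 0 < w := lt_of_le_of_lt hv0 hvw
  have hdw : ∀ i, 0 < w + d i := fun i => lt_of_le_of_lt (hdv i) (by linarith)
  set s : Fin n → ℝ := fun i => Real.sqrt (w + d i) + Real.sqrt (v + d i) with hs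
  have hspos : ∀ i, 0 < s i := fun i =>
    add_pos_of_pos_of_nonneg (Real.sqrt_pos.2 (hdw i)) (Real.sqrt_nonneg _)
  have hsqv : 0 < Real.sqrt w + Real.sqrt v :=
    add_pos_of_pos_of_nonneg (Real.sqrt_pos.2 hwpos) (Real.sqrt_nonneg _)
  have hssum : ∑ i, s i = ((n:ℝ) - 2) * (Real.sqrt w + Real.sqrt v) := by
    simp only [hs]
    rw [Finset.sum_add_distrib, hv, hw]; ring
  have hdiff : ∀ i, Real.sqrt (w + d i) - Real.sqrt (v + d i) = (w - v) / s i := by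
    intro i
    rw [eq_div_iff (ne_of_gt (hspos i))]
    have hA : Real.sqrt (w + d i) ^ 2 = w + d i := Real.sq_sqrt (hdw i).le
    have hB : Real.sqrt (v + d i) ^ 2 = v + d i := Real.sq_sqrt (hdv i)
    simp only [hs]
    linear_combination hA - hB
  have hdiff2 : Real.sqrt w - Real.sqrt v = (w - v) / (Real.sqrt w + Real.sqrt v) := by
    rw [eq_div_iff (ne_of_gt hsqv)]
    have hA : Real.sqrt w ^ 2 = w := Real.sq_sqrt hwpos.le
    have hB : Real.sqrt v ^ 2 = v := Real.sq_sqrt hv0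
    linear_combination hA - hB
  have hsumdiff : ∑ i, (w - v) / s i = ((n:ℝ) - 2) * ((w - v) / (Real.sqrt w + Real.sqrt v)) := by
    calc ∑ i, (w - v) / s i
        = ∑ i, (Real.sqrt (w + d i) - Real.sqrt (v + d i)) := by
          refine Finset.sum_congr rfl fun i _ => (hdiff i).symm
      _ = ((n:ℝ) - 2) * Real.sqrt w - ((n:ℝ) - 2) * Real.sqrt v := by
          rw [Finset.sum_sub_distrib, hv, hw]
      _ = ((n:ℝ) - 2) * (Real.sqrt w - Real.sqrt v) := by ring
      _ = _ := by rw [hdiff2]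
  have hinvsum : ∑ i, 1 / s i = ((n:ℝ) - 2) / (Real.sqrt w + Real.sqrt v) := by
    have hwv : (0:ℝ) < w - v := by linarith
    have h1 : ∑ i, (w - v) / s i = (w - v) * ∑ i, 1 / s i := by
      rw [Finset.mul_sum]
      exact Finset.sum_congr rfl fun i _ => div_eq_mul_one_div _ _
    rw [h1] at hsumdiff
    field_simp at hsumdiff ⊢
    nlinarith [hsumdiff]
  -- Cauchy-Schwarz
  have hcs := Finset.sum_mul_sq_le_sq_mul_sq Finset.univ
    (fun i => Real.sqrt (s i)) (fun i => Real.sqrt (1 / s i))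
  have h1 : ∀ i : Fin n, Real.sqrt (s i) * Real.sqrt (1 / s i) = 1 := by
    intro i
    rw [← Real.sqrt_mul (hspos i).le, mul_one_div, div_self (ne_of_gt (hspos i)), Real.sqrt_one]
  have h2 : ∀ i : Fin n, Real.sqrt (s i) ^ 2 = s i := fun i => Real.sq_sqrt (hspos i).le
  have h3 : ∀ i : Fin n, Real.sqrt (1 / s i) ^ 2 = 1 / s i := fun i =>
    Real.sq_sqrt (by positivity)
  simp only [h1, h2, h3, Finset.sum_const, Finset.card_univ, Fintype.card_fin, nsmul_eq_mul,
    mul_one] at hcs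
  rw [hssum, hinvsum] at hcs
  have : ((n:ℝ) - 2) * (Real.sqrt w + Real.sqrt v) * (((n:ℝ) - 2) / (Real.sqrt w + Real.sqrt v))
      = ((n:ℝ) - 2) ^ 2 := by
    field_simp
  rw [this] at hcs
  nlinarith [hcs, hn2]

/-- under Assumption 1, `v* = (1−2q)²` satisfies `v* > v₀(a)`, is the unique
fixed point of `v = f(a,v)` on `[v₀(a), +∞)`, and `p_i = g_i(a, v*)` for all `i`. -/
theorem fixed_point_characterization
    (n : ℕ) (hn : 2 < n)
    (p : Fin n → ℝ) (hp : ∀ i, p i ∈ Set.Icc (0 : ℝ) 1)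
    (q : ℝ) (hq : q = (1 / (n : ℝ)) * ∑ i, p i) (hqlt : q < 1 / 2 - 1 / (n : ℝ))
    (a : Fin n → ℝ) (haIcc : ∀ i, a i ∈ Set.Icc (0 : ℝ) 1)
    (ha : ∀ i, a i = (1 / ((n : ℝ) - 1)) * ∑ j ∈ Finset.univ.erase i,
      (p i * p j + (1 - p i) * (1 - p j))) :
    v0FP n a < (1 - 2 * q) ^ 2 ∧
    fFP n a ((1 - 2 * q) ^ 2) = (1 - 2 * q) ^ 2 ∧
    (∀ v ∈ Set.Ici (v0FP n a), fFP n a v = v → v = (1 - 2 * q) ^ 2) ∧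
    ∀ i, p i = gFP n a ((1 - 2 * q) ^ 2) i := by
  have hnR : (2:ℝ) < (n:ℝ) := by exact_mod_cast hn
  have hn0 : (n:ℝ) ≠ 0 := by positivity
  have hnpos : (0:ℝ) < n := by linarith
  have hn1 : (n:ℝ) - 1 ≠ 0 := by intro h; nlinarith
  have hn2 : (0:ℝ) < (n:ℝ) - 2 := by linarith
  set S : ℝ := ∑ i, p i with hS
  set t : ℝ := 1 - 2 * q with htdef
  have ht : 2 / (n:ℝ) < t := by
    have h1 : (0:ℝ) < 1 / (n:ℝ) := by positivity
    have : q < 1/2 - 1/(n:ℝ) := hqlt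
    have : t = 1 - 2*q := rfl
    rw [this]
    rw [div_eq_mul_one_div 2 (n:ℝ)]
    linarith
  have htpos : 0 < t := lt_trans (by positivity) ht
  set b : Fin n → ℝ := fun i => (4 * p i - 2) / (n:ℝ) with hb
  have hqS : q = S / n := by rw [hq, one_div, inv_mul_eq_div]
  -- key: delta at v* equals (t + b i)^2
  have hsumform : ∀ i : Fin n, ∑ j ∈ Finset.univ.erase i,
      (p i * p j + (1 - p i) * (1 - p j))
      = ((n:ℝ) - 1) * (1 - p i) + (2 * p i - 1) * (S - p i) := by
    intro i
    have h1 : ∀ j : Fin n, p i * p j + (1 - p i) * (1 - p j)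
        = (1 - p i) + (2 * p i - 1) * p j := fun j => by ring
    rw [Finset.sum_congr rfl fun j _ => h1 j, Finset.sum_add_distrib, Finset.sum_const,
      Finset.card_erase_of_mem (Finset.mem_univ i), Finset.card_univ, Fintype.card_fin,
      ← Finset.mul_sum, Finset.sum_erase_eq_sub (Finset.mem_univ i)]
    have hcast : ((n - 1 : ℕ) : ℝ) = (n:ℝ) - 1 := by
      have : 1 ≤ n := by omega
      push_cast [this]; ring
    rw [nsmul_eq_mul, hcast]
  have key : ∀ i, deltaFP n a ((1 - 2*q)^2) i = (t + b i)^2 := by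
    intro i
    unfold deltaFP
    rw [ha i, hsumform i, hb, htdef, hqS]
    field_simp
    ring
  have hbpos : ∀ i, 0 < t + b i := by
    intro i
    have hpi := (hp i).1
    have h1 : (-2:ℝ)/(n:ℝ) ≤ b i := by
      rw [hb]
      exact (div_le_div_iff_of_pos_right hnpos).mpr (by linarith)
    have h2 : (-2:ℝ)/(n:ℝ) = -(2/(n:ℝ)) := by ring
    rw [h2] at h1
    linarith
  have hsqrt : ∀ i, Real.sqrt (deltaFP n a ((1 - 2*q)^2) i) = t + b i := by
    intro i
    rw [key i, Real.sqrt_sq (hbpos i).le]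
  have hsumb : ∑ i, b i = 4 * q - 2 := by
    rw [hb, ← Finset.sum_div, Finset.sum_sub_distrib, ← Finset.mul_sum, Finset.sum_const,
      Finset.card_univ, Fintype.card_fin, nsmul_eq_mul, ← hS, hqS]
    field_simp
  have hsumsqrt : ∑ i, Real.sqrt (deltaFP n a ((1 - 2*q)^2) i) = ((n:ℝ) - 2) * t := by
    rw [Finset.sum_congr rfl fun i _ => hsqrt i, Finset.sum_add_distrib, Finset.sum_const,
      Finset.card_univ, Fintype.card_fin, nsmul_eq_mul, hsumb, htdef]
    ring
  have htnn : (0:ℝ) ≤ 1 - 2*q := by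
    have h := htpos; rw [htdef] at h; linarith
  set c : ℝ := 4 * ((n:ℝ) - 1) / (n:ℝ)^2 with hc
  have hcpos : 0 ≤ c := by rw [hc]; exact div_nonneg (by nlinarith) (by positivity)
  have hv0lt : v0FP n a < (1 - 2*q)^2 := by
    unfold v0FP
    have hne : Nonempty (Fin n) := ⟨⟨0, by omega⟩⟩
    have htsq : (0:ℝ) < (1 - 2*q)^2 := by rw [← htdef]; exact pow_pos htpos 2
    refine max_lt ?_ htsq
    obtain ⟨j, hj⟩ := Finite.exists_max (fun i : Fin n => 2 * a i - 1)
    have hsup : (⨆ i, (2 * a i - 1)) = 2 * a j - 1 :=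
      le_antisymm (ciSup_le hj)
        (le_ciSup (f := fun i => 2 * a i - 1) (Set.Finite.bddAbove (Set.finite_range _)) j)
    rw [hsup]
    have hkey := key j
    unfold deltaFP at hkey
    have hpos : 0 < (t + b j)^2 := pow_pos (hbpos j) 2
    have h4 : 4*((n:ℝ)-1)/(n:ℝ)^2 * (2*a j - 1) = (1-2*q)^2 - (t + b j)^2 := by
      linear_combination -hkey
    rw [h4]
    linarith [hpos]
  have hfix : fFP n a ((1 - 2*q)^2) = (1 - 2*q)^2 := by
    unfold fFP
    rw [hsumsqrt, htdef]
    field_simp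
  refine ⟨hv0lt, hfix, ?_, ?_⟩
  · -- uniqueness
    intro v hv hfv
    set d : Fin n → ℝ := fun i => c * (1 - 2 * a i) with hd
    have hdelta : ∀ u : ℝ, ∀ i, deltaFP n a u i = u + d i := fun u i => rfl
    have hvnn : 0 ≤ v := le_trans (le_max_right _ _) hv
    have hdv : ∀ i, 0 ≤ v + d i := by
      intro i
      have h1 : c * (2 * a i - 1) ≤ c * (⨆ i, (2 * a i - 1)) :=
        mul_le_mul_of_nonneg_left
          (le_ciSup (f := fun i => 2 * a i - 1) (Set.Finite.bddAbove (Set.finite_range _)) i) hcpos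
      have h2 : c * (⨆ i, (2 * a i - 1)) ≤ v := le_trans (le_max_left _ _) hv
      have h3 : d i = -(c * (2 * a i - 1)) := by rw [hd]; ring
      rw [h3]; linarith
    have hXnn : 0 ≤ (1 / ((n:ℝ) - 2)) * ∑ i, Real.sqrt (deltaFP n a v i) := by
      have : 0 ≤ ∑ i, Real.sqrt (deltaFP n a v i) :=
        Finset.sum_nonneg fun i _ => Real.sqrt_nonneg _
      positivity
    have hsv : ∑ i, Real.sqrt (v + d i) = ((n:ℝ) - 2) * Real.sqrt v := by
      have h1 : Real.sqrt v = (1 / ((n:ℝ) - 2)) * ∑ i, Real.sqrt (deltaFP n a v i) := by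
        conv_lhs => rw [← hfv]
        exact Real.sqrt_sq hXnn
      have h2 : ∑ i, Real.sqrt (deltaFP n a v i) = ((n:ℝ) - 2) * Real.sqrt v := by
        rw [h1]; field_simp
      simpa only [hdelta] using h2
    have hwnn : (0:ℝ) ≤ (1 - 2*q)^2 := sq_nonneg _
    have hsw : ∑ i, Real.sqrt ((1 - 2*q)^2 + d i) = ((n:ℝ) - 2) * Real.sqrt ((1 - 2*q)^2) := by
      have h2 : ∑ i, Real.sqrt (deltaFP n a ((1 - 2*q)^2) i)
          = ((n:ℝ) - 2) * Real.sqrt ((1 - 2*q)^2) := by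
        rw [hsumsqrt, Real.sqrt_sq htnn, htdef]
      simpa only [hdelta] using h2
    have hdw : ∀ i, 0 ≤ (1 - 2*q)^2 + d i := by
      intro i
      have h2 : (0:ℝ) ≤ deltaFP n a ((1 - 2*q)^2) i := by rw [key i]; positivity
      simpa only [hdelta] using h2
    by_contra hne
    rcases lt_or_gt_of_ne hne with hlt | hgt
    · exact fpAux n hn d v ((1 - 2*q)^2) hlt hvnn hdv hsv hsw
    · exact fpAux n hn d ((1 - 2*q)^2) v hgt hwnn hdw hsw hsv
  · -- g identity
    intro i
    unfold gFP
    rw [hsqrt i, Real.sqrt_sq htnn, hb, htdef]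
    field_simp
    ring
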